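/- arXiv:2210.05959 — 2 statements merged into one kernel-verified Lean document; each statement's English description precedes it below -/
import Mathlib

section
/- Let ReLU(t) = max(t, 0) and step(t) = 1 if t > 0 and 0 if t < 0. Let Â be a real n×n matrix, E₀ a real n×h₀ matrix, W₁ a real h₀×h₁ matrix, W₂ a real h₁×h₂ matrix, and G a real n×h₂ matrix. Set E₁ = ReLU•(Â E₀ W₁), S₁ = step•(Â E₀ W₁), S₂ = step•(Â E₁ W₂), and define R(W₁', W₂') = ∑_{i,j} G[i,j] · (ReLU•(Â (ReLU•(Â E₀ W₁')) W₂'))[i,j]. Assume every entry of Â E₀ W₁ and every entry of Â E₁ W₂ is nonzero. Then the mixed second partial derivative ∂²R/∂W₁[a,b] ∂W₂[c,d] at (W₁, W₂) equals [(Â E₀)^T (M_{cd} ⊙ S₁)][a,b], where M_{cd} is the n×h₁ matrix with entries M_{cd}[x,y] = δ_{y,c} · [Â^T (G ⊙ S₂)][x,d]. -/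
/-!
Near the base point no preactivation of either layer changes sign, so both ReLUs act as
Hadamard multiplication by the fixed masks `S₁` and `S₂`. Locally, the loss is therefore the
Frobenius pairing `trace (H * Xᵀ)` of `H = G ⊙ S₂` with a product `X` that is affine in each of
the two perturbation parameters, and its mixed derivative is the pairing with the product of
the two perturbation directions. Moving `Â`, `S₁` and the unit matrices to the other side of
the pairing (backpropagation) turns that into the stated entry.
-/

open Matrix

/-- The rectified linear unit `ReLU(t) = max(t, 0)`. -/
noncomputable def relu (t : ℝ) : ℝ := max t 0

/-- The step function: `1` for `t > 0`, and `0` otherwise (in particular `0` for `t < 0`). -/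
noncomputable def step (t : ℝ) : ℝ := if 0 < t then 1 else 0

open Filter Topology

@[fun_prop]
lemma continuous_relu : Continuous relu := continuous_id.max continuous_const

section LocalLinearity

variable {X : Type*} [TopologicalSpace X] {x₀ : X}

lemma eventually_relu_eq_step_mul {f : X → ℝ} (hf : ContinuousAt f x₀) (hne : f x₀ ≠ 0) :
    ∀ᶠ x in 𝓝 x₀, relu (f x) = step (f x₀) * f x := by
  rcases hne.lt_or_gt with hneg | hpos
  · filter_upwards [hf.eventually (eventually_lt_nhds hneg)] with x hx
    simp [relu, step, not_lt.2 hneg.le, max_eq_right hx.le]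
  · filter_upwards [hf.eventually (eventually_gt_nhds hpos)] with x hx
    simp [relu, step, hpos, max_eq_left hx.le]

lemma eventually_map_relu_eq_hadamard {m n : Type*} [Finite m] [Finite n]
    {M : X → Matrix m n ℝ} (hM : ContinuousAt M x₀) (hne : ∀ i j, M x₀ i j ≠ 0) :
    ∀ᶠ x in 𝓝 x₀, (M x).map relu = (M x₀).map step ⊙ M x := by
  have hentry : ∀ i j, ∀ᶠ x in 𝓝 x₀, relu (M x i j) = step (M x₀ i j) * M x i j := fun i j =>
    eventually_relu_eq_step_mul
      ((continuous_apply j).continuousAt.comp ((continuous_apply i).continuousAt.comp hM))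
      (hne i j)
  filter_upwards [eventually_all.2 fun i => eventually_all.2 (hentry i)] with x hx
  exact Matrix.ext hx

end LocalLinearity

lemma deriv_deriv_congr_of_eventuallyEq {𝕜 E : Type*} [NontriviallyNormedField 𝕜]
    [NormedAddCommGroup E] [NormedSpace 𝕜 E] {F Φ : 𝕜 → 𝕜 → E} {x₀ y₀ : 𝕜}
    (h : ∀ᶠ p in 𝓝 (x₀, y₀), F p.1 p.2 = Φ p.1 p.2) :
    deriv (fun s => deriv (F s) y₀) x₀ = deriv (fun s => deriv (Φ s) y₀) x₀ := by
  rw [nhds_prod_eq] at h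
  refine Filter.EventuallyEq.deriv_eq ?_
  filter_upwards [h.curry] with s hs
  exact Filter.EventuallyEq.deriv_eq hs

lemma mul_transpose_single_one {R m n p : Type*} [CommSemiring R] [Fintype n] [DecidableEq n]
    [DecidableEq p] (Y : Matrix m n R) (c : p) (d : n) :
    Y * (single c d (1 : R))ᵀ = of fun x y => (if y = c then 1 else 0) * Y x d := by
  ext x y
  by_cases hy : y = c <;> simp [transpose_single, mul_single_apply_same, mul_single_apply_of_ne, hy]

section Pairing

variable {R : Type*} [CommSemiring R] {m n p : Type*} [Fintype m] [Fintype n]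

lemma trace_mul_transpose_mul_left [Fintype p]
    (H : Matrix m n R) (A : Matrix m p R) (X : Matrix p n R) :
    trace (H * (A * X)ᵀ) = trace (Aᵀ * H * Xᵀ) := by
  rw [transpose_mul, ← Matrix.mul_assoc, trace_mul_cycle]

lemma trace_mul_transpose_mul_right [Fintype p]
    (H : Matrix m n R) (X : Matrix m p R) (B : Matrix p n R) :
    trace (H * (X * B)ᵀ) = trace (H * Bᵀ * Xᵀ) := by
  rw [transpose_mul, Matrix.mul_assoc]

lemma trace_mul_transpose_hadamard (H S X : Matrix m n R) :
    trace (H * (S ⊙ X)ᵀ) = trace (H ⊙ S * Xᵀ) := by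
  rw [← sum_hadamard_eq, ← sum_hadamard_eq, hadamard_assoc]

lemma trace_mul_transpose_single_one [DecidableEq m] [DecidableEq n] (H : Matrix m n R)
    (a : m) (b : n) :
    trace (H * (single a b (1 : R))ᵀ) = H a b := by
  simp [transpose_single, trace_mul_single]

lemma deriv_trace_mul_transpose_add_smul {𝕜 : Type*} [NontriviallyNormedField 𝕜]
    (H X Y : Matrix m n 𝕜) (t₀ : 𝕜) :
    deriv (fun t : 𝕜 => trace (H * (X + t • Y)ᵀ)) t₀ = trace (H * Yᵀ) := by
  simp [Matrix.mul_add, Matrix.mul_smul]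

lemma trace_mul_transpose_mul_hadamard_mul_single {k l : Type*} [Fintype p] [Fintype k]
    [Fintype l] [DecidableEq k] [DecidableEq l] [DecidableEq n]
    (H : Matrix m n R) (A : Matrix m p R) (S : Matrix p k R) (E : Matrix p l R)
    (a : l) (b c : k) (d : n) :
    trace (H * (A * (S ⊙ (E * single a b (1 : R))) * single c d (1 : R))ᵀ)
      = (Eᵀ * ((Aᵀ * H * (single c d (1 : R))ᵀ) ⊙ S)) a b := by
  rw [trace_mul_transpose_mul_right, trace_mul_transpose_mul_left, trace_mul_transpose_hadamard,
    trace_mul_transpose_mul_left, trace_mul_transpose_single_one, Matrix.mul_assoc Aᵀ]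

lemma deriv_deriv_trace_mul_transpose_add_smul_mul_add_smul {𝕜 : Type*}
    [NontriviallyNormedField 𝕜] [Fintype p] (H : Matrix m n 𝕜) (X Y : Matrix m p 𝕜)
    (W V : Matrix p n 𝕜) (s₀ t₀ : 𝕜) :
    deriv (fun s => deriv (fun t => trace (H * ((X + s • Y) * (W + t • V))ᵀ)) t₀) s₀
      = trace (H * (Y * V)ᵀ) := by
  simp only [Matrix.mul_add, Matrix.mul_smul, deriv_trace_mul_transpose_add_smul,
    Matrix.add_mul, Matrix.smul_mul]

end Pairing

/-- **Case 4 of Theorem 1, Eq. 16 of the paper.** For the two-layer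
ReLU GCN readout `R(W₁', W₂') = ∑_{i,j} G[i,j] • (ReLU•(Â (ReLU•(Â E₀ W₁')) W₂'))[i,j]`
with no preactivation entry at the ReLU kink, the mixed second partial derivative
`∂²R / ∂W₁[a,b] ∂W₂[c,d]` at `(W₁, W₂)` equals `[(Â E₀)ᵀ (M_{cd} ⊙ S₁)][a,b]`, where
`M_{cd}[x,y] = δ_{y,c} • [Âᵀ (G ⊙ S₂)][x,d]`, `S₁ = step•(Â E₀ W₁)`,
`S₂ = step•(Â E₁ W₂)`, `E₁ = ReLU•(Â E₀ W₁)`. -/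
theorem gcn_mixed_hessian_weight_next_weight
    (n h₀ h₁ h₂ : ℕ)
    (Ahat : Matrix (Fin n) (Fin n) ℝ) (E₀ : Matrix (Fin n) (Fin h₀) ℝ)
    (W₁ : Matrix (Fin h₀) (Fin h₁) ℝ) (W₂ : Matrix (Fin h₁) (Fin h₂) ℝ)
    (G : Matrix (Fin n) (Fin h₂) ℝ)
    (h₁ne : ∀ i j, (Ahat * E₀ * W₁) i j ≠ 0)
    (h₂ne : ∀ i j, (Ahat * ((Ahat * E₀ * W₁).map relu) * W₂) i j ≠ 0)
    (a : Fin h₀) (b : Fin h₁) (c : Fin h₁) (d : Fin h₂) :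
    deriv (fun s : ℝ =>
        deriv (fun t : ℝ =>
            ∑ i, ∑ j, G i j *
              ((Ahat *
                  ((Ahat * E₀ * (W₁ + s • Matrix.single a b (1 : ℝ))).map relu) *
                  (W₂ + t • Matrix.single c d (1 : ℝ))).map relu) i j) 0) 0
      = ((Ahat * E₀)ᵀ *
          Matrix.hadamard
            (Matrix.of (fun x y =>
              (if y = c then (1 : ℝ) else 0) *
                (Ahatᵀ *
                  Matrix.hadamard G
                    ((Ahat * ((Ahat * E₀ * W₁).map relu) * W₂).map step)) x d))
            ((Ahat * E₀ * W₁).map step)) a b := by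
  set S₁ := (Ahat * E₀ * W₁).map step
  set S₂ := (Ahat * (Ahat * E₀ * W₁).map relu * W₂).map step
  let P : ℝ → Matrix (Fin n) (Fin h₁) ℝ := fun s => Ahat * E₀ * (W₁ + s • single a b 1)
  let Q : ℝ × ℝ → Matrix (Fin n) (Fin h₂) ℝ := fun p =>
    Ahat * (P p.1).map relu * (W₂ + p.2 • single c d 1)
  have hP0 : P 0 = Ahat * E₀ * W₁ := by simp [P]
  have hQ0 : Q (0, 0) = Ahat * (Ahat * E₀ * W₁).map relu * W₂ := by simp [Q, hP0]
  have hP : Continuous P := by fun_prop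
  have hQ : Continuous Q := by fun_prop
  have hfirst : ∀ᶠ p : ℝ × ℝ in 𝓝 (0, 0), (P p.1).map relu = S₁ ⊙ P p.1 := by
    have := eventually_map_relu_eq_hadamard (M := fun p : ℝ × ℝ => P p.1) (x₀ := (0, 0))
      (hP.comp continuous_fst).continuousAt (by rw [hP0]; exact h₁ne)
    rwa [hP0] at this
  have hsecond : ∀ᶠ p : ℝ × ℝ in 𝓝 (0, 0), (Q p).map relu = S₂ ⊙ Q p := by
    have := eventually_map_relu_eq_hadamard hQ.continuousAt (by rw [hQ0]; exact h₂ne)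
    rwa [hQ0] at this
  rw [deriv_deriv_congr_of_eventuallyEq (Φ := fun s t => trace (G ⊙ S₂ *
      ((Ahat * (S₁ ⊙ (Ahat * E₀ * W₁)) + s • (Ahat * (S₁ ⊙ (Ahat * E₀ * single a b (1 : ℝ)))))
        * (W₂ + t • single c d 1))ᵀ)),
    deriv_deriv_trace_mul_transpose_add_smul_mul_add_smul,
    trace_mul_transpose_mul_hadamard_mul_single, mul_transpose_single_one]
  filter_upwards [hfirst, hsecond] with p h1 h2
  change trace (G * ((Q p).map relu)ᵀ) = _
  rw [h2, trace_mul_transpose_hadamard]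
  simp only [Q]
  rw [h1]
  simp only [P, Matrix.mul_add, Matrix.mul_smul, hadamard_add, hadamard_smul]
end

section
/- Let ReLU(t) = max(t, 0) and step(t) = 1 if t > 0 and 0 if t < 0. Let Â be a real n×n matrix, E a real n×h matrix, W' a real h×h' matrix, W'' a real h'×h'' matrix, and G a real n×h'' matrix. Set E' = ReLU•(Â E W'), S' = step•(Â E W'), S'' = step•(Â E' W''), and define R(Ẽ, W̃) = ∑_{i,j} G[i,j] · (ReLU•(Â (ReLU•(Â Ẽ W')) W̃))[i,j]. Assume every entry of Â E W' and every entry of Â E' W'' is nonzero. Then the mixed second partial derivative ∂²R/∂E[a,b] ∂W''[c,d] at (E, W'') equals [Â^T (M_{cd} ⊙ S') (W')^T][a,b], where M_{cd} is the n×h' matrix with entries M_{cd}[x,y] = δ_{y,c} · [Â^T (G ⊙ S'')][x,d]. -/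
open Matrix

/-!
Away from the kink, ReLU is locally the linear map `y ↦ step x * y` and `step` is locally
constant. Write `B`, `C` for the matrix units at `(a, b)` and `(c, d)` and `⟪H, M⟫` for the
Frobenius pairing. The `W''`-derivative of `R` at `(E + s B, W'')` is
`⟪G ⊙ step•(Â Eₛ W''), Â Eₛ C⟫` with `Eₛ = ReLU•(Â (E + s B) W')`; for small `s` the step
pattern stays `S''`, so this equals `⟪Âᵀ (G ⊙ S'') Cᵀ, Eₛ⟫`, and `Âᵀ (G ⊙ S'') Cᵀ` is `M_{cd}`.
Differentiating in `s` gives `⟪M_{cd} ⊙ S', Â B W'⟫ = [Âᵀ (M_{cd} ⊙ S') W'ᵀ][a, b]`.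
-/

open Filter Topology

lemma eventually_step_eq {x : ℝ} (hx : x ≠ 0) : ∀ᶠ y in 𝓝 x, step y = step x := by
  rcases hx.lt_or_gt with hneg | hpos
  · filter_upwards [eventually_lt_nhds hneg] with y hy
    simp [step, hy.le.not_gt, hneg.le.not_gt]
  · filter_upwards [eventually_gt_nhds hpos] with y hy
    simp [step, hy, hpos]

lemma relu_eventuallyEq_step_mul {x : ℝ} (hx : x ≠ 0) : relu =ᶠ[𝓝 x] fun y => step x * y := by
  rcases hx.lt_or_gt with hneg | hpos
  · filter_upwards [eventually_lt_nhds hneg] with y hy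
    simp [relu, step, hy.le, hneg.le.not_gt]
  · filter_upwards [eventually_gt_nhds hpos] with y hy
    simp [relu, step, hy.le, hpos]

lemma hasDerivAt_relu {x : ℝ} (hx : x ≠ 0) : HasDerivAt relu (step x) x := by
  simpa using ((hasDerivAt_id x).const_mul (step x)).congr_of_eventuallyEq
    (relu_eventuallyEq_step_mul hx)

namespace Matrix

section Pairing

variable {R : Type*} [CommSemiring R] {l m n o : Type*}

def frobeniusInner [Fintype m] [Fintype n] (H M : Matrix m n R) : R :=
  ∑ i, ∑ j, H i j * M i j

lemma frobeniusInner_eq_trace [Fintype m] [Fintype n] (H M : Matrix m n R) :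
    frobeniusInner H M = trace (H * Mᵀ) :=
  sum_hadamard_eq H M

lemma frobeniusInner_hadamard_right [Fintype m] [Fintype n] (G S N : Matrix m n R) :
    frobeniusInner G (S ⊙ N) = frobeniusInner (G ⊙ S) N := by
  simp only [frobeniusInner, hadamard_apply, mul_assoc]

lemma frobeniusInner_mul_mul [Fintype l] [Fintype m] [Fintype n] [Fintype o]
    (H : Matrix l o R) (X : Matrix l m R) (M : Matrix m n R) (Y : Matrix n o R) :
    frobeniusInner H (X * M * Y) = frobeniusInner (Xᵀ * H * Yᵀ) M := by
  simp only [frobeniusInner_eq_trace, transpose_mul, ← Matrix.mul_assoc]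
  rw [trace_mul_comm]
  simp only [Matrix.mul_assoc]

lemma frobeniusInner_single_one [Fintype m] [Fintype n] [DecidableEq m] [DecidableEq n]
    (H : Matrix m n R) (a : m) (b : n) : frobeniusInner H (single a b 1) = H a b := by
  simp [frobeniusInner, single, ite_and]

lemma mul_transpose_single_one_apply [Fintype n] [DecidableEq n] [DecidableEq o]
    (N : Matrix l n R) (c : o) (d : n) (x : l) (y : o) :
    (N * (single c d (1 : R))ᵀ) x y = (if y = c then 1 else 0) * N x d := by
  by_cases hy : y = c <;> simp [hy]

lemma mul_add_smul_mul [Fintype m] [Fintype n] (X : Matrix l m R) (M N : Matrix m n R)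
    (Y : Matrix n o R) (s : R) : X * (M + s • N) * Y = X * M * Y + s • (X * N * Y) := by
  rw [Matrix.mul_add, Matrix.add_mul, Matrix.mul_smul, Matrix.smul_mul]

end Pairing

variable {m n : Type*} [Fintype m] [Fintype n]

lemma hasDerivAt_frobeniusInner_map_relu (G A B : Matrix m n ℝ) (hA : ∀ i j, A i j ≠ 0) :
    HasDerivAt (fun t : ℝ => frobeniusInner G ((A + t • B).map relu))
      (frobeniusInner G (A.map step ⊙ B)) 0 := by
  refine HasDerivAt.fun_sum fun i _ => HasDerivAt.fun_sum fun j _ => HasDerivAt.const_mul _ ?_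
  have hline : HasDerivAt (fun t : ℝ => A i j + t * B i j) (B i j) 0 := by
    simpa using ((hasDerivAt_id (0 : ℝ)).mul_const (B i j)).const_add (A i j)
  exact (hasDerivAt_relu (hA i j)).comp_of_eq (0 : ℝ) hline (by simp)

lemma eventually_map_step_eq {X : Type*} [TopologicalSpace X] {F : X → Matrix m n ℝ}
    (hF : Continuous F) {x : X} (hx : ∀ i j, F x i j ≠ 0) :
    ∀ᶠ y in 𝓝 x, (∀ i j, F y i j ≠ 0) ∧ (F y).map step = (F x).map step := by
  have hentry : ∀ i j, ∀ᶠ y in 𝓝 x, F y i j ≠ 0 ∧ step (F y i j) = step (F x i j) := fun i j =>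
    have hc := (hF.matrix_elem i j).continuousAt (x := x)
    (hc.eventually_ne (hx i j)).and (hc.eventually (eventually_step_eq (hx i j)))
  filter_upwards [eventually_all.2 fun i => eventually_all.2 (hentry i)] with y hy
  exact ⟨fun i j => (hy i j).1, ext fun i j => (hy i j).2⟩

end Matrix

/-- **Case 5 of Theorem 1, Eq. 18 with the inner formula of Case 4.**
For the two-layer ReLU GCN readout
`R(Ẽ, W̃) = ∑_{i,j} G[i,j] • (ReLU•(Â (ReLU•(Â Ẽ W')) W̃))[i,j]` with no
preactivation entry at the ReLU kink, the mixed second partial derivative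
`∂²R / ∂E[a,b] ∂W''[c,d]` at `(E, W'')` equals `[Âᵀ (M_{cd} ⊙ S') (W')ᵀ][a,b]`,
where `M_{cd}[x,y] = δ_{y,c} • [Âᵀ (G ⊙ S'')][x,d]`, `S' = step•(Â E W')`,
`S'' = step•(Â E' W'')`, `E' = ReLU•(Â E W')`. -/
theorem gcn_mixed_hessian_embedding_two_layers_up
    (n h h' h'' : ℕ)
    (Ahat : Matrix (Fin n) (Fin n) ℝ) (E : Matrix (Fin n) (Fin h) ℝ)
    (W' : Matrix (Fin h) (Fin h') ℝ) (W'' : Matrix (Fin h') (Fin h'') ℝ)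
    (G : Matrix (Fin n) (Fin h'') ℝ)
    (h'ne : ∀ i j, (Ahat * E * W') i j ≠ 0)
    (h''ne : ∀ i j, (Ahat * ((Ahat * E * W').map relu) * W'') i j ≠ 0)
    (a : Fin n) (b : Fin h) (c : Fin h') (d : Fin h'') :
    deriv (fun s : ℝ =>
        deriv (fun t : ℝ =>
            ∑ i, ∑ j, G i j *
              ((Ahat *
                  ((Ahat * (E + s • Matrix.single a b (1 : ℝ)) * W').map relu) *
                  (W'' + t • Matrix.single c d (1 : ℝ))).map relu) i j) 0) 0
      = (Ahatᵀ *
          Matrix.hadamard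
            (Matrix.of (fun x y =>
              (if y = c then (1 : ℝ) else 0) *
                (Ahatᵀ *
                  Matrix.hadamard G
                    ((Ahat * ((Ahat * E * W').map relu) * W'').map step)) x d))
            ((Ahat * E * W').map step) *
          W'ᵀ) a b := by
  show deriv (fun s => deriv (fun t => frobeniusInner G _) 0) 0 = _
  simp_rw [mul_add_smul_mul]
  set B := single a b (1 : ℝ)
  set C := single c d (1 : ℝ)
  set P := Ahat * E * W'
  set Q := Ahat * B * W'
  set S'' := (Ahat * P.map relu * W'').map step
  set K := Ahatᵀ * (G ⊙ S'') * Cᵀ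
  have hinner : (fun s : ℝ => deriv (fun t : ℝ =>
        frobeniusInner G ((Ahat * (P + s • Q).map relu * (W'' + t • C)).map relu)) 0)
        =ᶠ[𝓝 0] fun s => frobeniusInner K ((P + s • Q).map relu) := by
    have hcont : Continuous fun s : ℝ => Ahat * (P + s • Q).map relu * W'' := by fun_prop
    have hne0 : ∀ i j, (Ahat * (P + (0 : ℝ) • Q).map relu * W'') i j ≠ 0 := by
      simpa only [zero_smul, add_zero] using h''ne
    filter_upwards [eventually_map_step_eq hcont hne0] with s ⟨hne, hstep⟩
    simp_rw [Matrix.mul_add, Matrix.mul_smul]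
    rw [(hasDerivAt_frobeniusInner_map_relu G _ _ hne).deriv, hstep, zero_smul, add_zero,
      frobeniusInner_hadamard_right, frobeniusInner_mul_mul]
  have hK : K = of fun x y => (if y = c then 1 else 0) * (Ahatᵀ * (G ⊙ S'')) x d :=
    ext fun x y => mul_transpose_single_one_apply _ c d x y
  have houter := hasDerivAt_frobeniusInner_map_relu K P Q h'ne
  rw [hinner.deriv_eq, houter.deriv, frobeniusInner_hadamard_right, frobeniusInner_mul_mul,
    frobeniusInner_single_one, hK]
end
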